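/- A downward closed family G of itemsets is decomposable if and only if the family of its maximal sets is decomposable. Moreover, the junction-tree distributions defined by a junction tree over the maximal sets and by one over the whole family G coincide. -/

import Mathlib

open scoped Classical

/-- A probability distribution on binary vectors over `Fin K`. -/
def IsDistribution {K : ℕ} (p : (Fin K → Bool) → ℝ) : Prop :=
  (∀ v, 0 ≤ p v) ∧ ∑ v, p v = 1

/-- Marginal probability of the event "agrees with `v` on the itemset `X`". -/
noncomputable def margAt {K : ℕ} (p : (Fin K → Bool) → ℝ) (X : Finset (Fin K))
    (v : Fin K → Bool) : ℝ :=
  ∑ w : Fin K → Bool, if ∀ i ∈ X, w i = v i then p w else 0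

/-- Frequency of an itemset: probability that all its attributes are 1. -/
noncomputable def pAll {K : ℕ} (p : (Fin K → Bool) → ℝ) (X : Finset (Fin K)) : ℝ :=
  margAt p X (fun _ => true)

/-- Empirical entropy of the marginal of `q` on the itemset `X`. -/
noncomputable def entX {K : ℕ} (q : (Fin K → Bool) → ℝ) (X : Finset (Fin K)) : ℝ :=
  -∑ v : {i // i ∈ X} → Bool,
    (∑ w : Fin K → Bool, if ∀ i : {i // i ∈ X}, w i.1 = v i then q w else 0) *
      Real.log (∑ w : Fin K → Bool, if ∀ i : {i // i ∈ X}, w i.1 = v i then q w else 0)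

/-- Entropy of a distribution on the full space. -/
noncomputable def entDist {K : ℕ} (p : (Fin K → Bool) → ℝ) : ℝ :=
  -∑ v : Fin K → Bool, p v * Real.log (p v)

def DownwardClosed {K : ℕ} (𝒢 : Finset (Finset (Fin K))) : Prop :=
  ∀ X ∈ 𝒢, ∀ Y ⊆ X, Y ∈ 𝒢

def Covers {K : ℕ} (𝒢 : Finset (Finset (Fin K))) : Prop :=
  ∀ a : Fin K, ∃ X ∈ 𝒢, a ∈ X

/-- A junction tree (forest) over the family `𝒢`: an acyclic graph on the members of `𝒢`
whose edges join intersecting cliques, such that cliques sharing an attribute are connected,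
and satisfying the running intersection property. -/
def IsJunctionTree {K : ℕ} (𝒢 : Finset (Finset (Fin K)))
    (G : SimpleGraph {C // C ∈ 𝒢}) : Prop :=
  G.IsAcyclic ∧
  (∀ X Y, G.Adj X Y → (X.1 ∩ Y.1).Nonempty) ∧
  (∀ (X Y : {C // C ∈ 𝒢}) (a : Fin K), a ∈ X.1 → a ∈ Y.1 → G.Reachable X Y) ∧
  (∀ (X Y : {C // C ∈ 𝒢}) (a : Fin K), a ∈ X.1 → a ∈ Y.1 →
    ∀ w : G.Walk X Y, w.IsPath → ∀ Z ∈ w.support, a ∈ Z.1)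

def Decomposable {K : ℕ} (𝒢 : Finset (Finset (Fin K))) : Prop :=
  ∃ G : SimpleGraph {C // C ∈ 𝒢}, IsJunctionTree 𝒢 G

noncomputable def sepEnt {K : ℕ} (q : (Fin K → Bool) → ℝ) {𝒢 : Finset (Finset (Fin K))}
    (e : Sym2 {C // C ∈ 𝒢}) : ℝ :=
  Sym2.lift ⟨fun X Y => entX q (X.1 ∩ Y.1), fun X Y => congrArg (entX q) (Finset.inter_comm _ _)⟩ e

/-- Entropy of a junction tree: sum over cliques minus sum over separators. -/
noncomputable def treeEnt {K : ℕ} (q : (Fin K → Bool) → ℝ) (𝒢 : Finset (Finset (Fin K)))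
    (G : SimpleGraph {C // C ∈ 𝒢}) : ℝ :=
  (∑ C : {C // C ∈ 𝒢}, entX q C.1) - ∑ e ∈ G.edgeFinset, sepEnt q e

/-- The junction tree distribution: product of clique marginals over product of
separator marginals. -/
noncomputable def jtDist {K : ℕ} (q : (Fin K → Bool) → ℝ) (𝒢 : Finset (Finset (Fin K)))
    (G : SimpleGraph {C // C ∈ 𝒢}) (v : Fin K → Bool) : ℝ :=
  (∏ C : {C // C ∈ 𝒢}, margAt q C.1 v) /
    ∏ e ∈ G.edgeFinset,
      Sym2.lift ⟨fun X Y => margAt q (X.1 ∩ Y.1) v,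
        fun X Y => congrArg (fun S => margAt q S v) (Finset.inter_comm _ _)⟩ e

/-- A function on full binary vectors that only depends on the attributes in `C`. -/
def DependsOnlyOn {K : ℕ} (p : (Fin K → Bool) → ℝ) (C : Finset (Fin K)) : Prop :=
  ∀ v w, (∀ i ∈ C, v i = w i) → p v = p w

/-- Empirical distribution of a dataset of `N` transactions. -/
noncomputable def empirical {K N : ℕ} (D : Fin N → (Fin K → Bool)) :
    (Fin K → Bool) → ℝ :=
  fun v => ((Finset.univ.filter (fun t => D t = v)).card : ℝ) / N


noncomputable def maxSets {K : ℕ} (𝒢 : Finset (Finset (Fin K))) : Finset (Finset (Fin K)) :=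
  𝒢.filter (fun X => ∀ Y ∈ 𝒢, X ⊆ Y → X = Y)

/-! Two local moves on junction forests carry the whole argument. A clique `X` contained in a
clique `M` can be hung on `M` as a leaf. Conversely, a non-maximal clique `X` has a neighbour
`N ⊇ X`, namely the next clique on the path towards a superset; reattaching every other neighbour
of `X` to `N` keeps the running intersection property and makes `X` a leaf, which can then be
pruned. Adding or removing the non-maximal sets one at a time shows that `𝒢` and its maximal sets
are decomposable together.

For the distributions take logarithms. In a junction tree the cliques containing a nonempty
itemset `T` form a subtree, so they outnumber the separators containing `T` by exactly one when
`T` lies in some clique, and both counts vanish otherwise. By Möbius inversion on the subset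
lattice, `log jtDist` is thus the sum of the Möbius transform of `T ↦ log P(x_T = v_T)` over the
itemsets covered by the family, which is the same for `𝒢` and for its maximal sets; the empty
itemset contributes nothing because its marginal is the total mass `1`. -/

namespace SimpleGraph

variable {V W : Type*} {G G' : SimpleGraph V} {P Q : V → Prop} {u v x : V}

def JoinedWithin (G : SimpleGraph V) (P : V → Prop) (u v : V) : Prop :=
  ∃ w : G.Walk u v, ∀ z ∈ w.support, P z

namespace JoinedWithin

lemma refl (hu : P u) : G.JoinedWithin P u u :=
  ⟨.nil, by simpa⟩

lemma of_adj (h : G.Adj u v) (hu : P u) (hv : P v) : G.JoinedWithin P u v :=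
  ⟨h.toWalk, by simp [hu, hv]⟩

lemma symm (h : G.JoinedWithin P u v) : G.JoinedWithin P v u :=
  let ⟨w, hw⟩ := h
  ⟨w.reverse, by simpa using hw⟩

lemma trans {y : V} (h₁ : G.JoinedWithin P u v) (h₂ : G.JoinedWithin P v y) :
    G.JoinedWithin P u y :=
  let ⟨w₁, hw₁⟩ := h₁
  let ⟨w₂, hw₂⟩ := h₂
  ⟨w₁.append w₂, by
    simp only [Walk.mem_support_append_iff]
    exact fun z hz => hz.elim (hw₁ z) (hw₂ z)⟩

lemma of_forall_adj (hG : ∀ x y, G.Adj x y → P x → P y → G'.JoinedWithin Q x y)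
    (h : G.JoinedWithin P u v) (hu : Q u) : G'.JoinedWithin Q u v := by
  obtain ⟨w, hw⟩ := h
  induction w with
  | nil => exact refl hu
  | cons hadj w ih =>
    simp only [Walk.support_cons, List.mem_cons, forall_eq_or_imp] at hw
    have hxy := hG _ _ hadj hw.1 (hw.2 _ w.start_mem_support)
    exact hxy.trans (ih (let ⟨w', hw'⟩ := hxy; hw' _ w'.end_mem_support) hw.2)

lemma mono (hle : G ≤ G') (h : G.JoinedWithin P u v) : G'.JoinedWithin P u v :=
  let ⟨w, hw⟩ := h
  ⟨w.mapLe hle, by rwa [Walk.support_mapLe_eq_support]⟩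

lemma map {G' : SimpleGraph W} {P : W → Prop} (f : G →g G') (h : G.JoinedWithin (P ∘ f) u v) :
    G'.JoinedWithin P (f u) (f v) :=
  let ⟨w, hw⟩ := h
  ⟨w.map f, by simpa using hw⟩

end JoinedWithin

lemma Walk.forall_mem_support_of_forall_adj (hG : ∀ x y, G.Adj x y → P y) (w : G.Walk u v)
    (hu : P u) : ∀ z ∈ w.support, P z := by
  induction w with
  | nil => simpa
  | cons h w ih =>
    simp only [support_cons, List.mem_cons, forall_eq_or_imp]
    exact ⟨hu, ih (hG _ _ h)⟩

lemma isAcyclic_of_induce {s : Set V} (hs : ∀ x y, G.Adj x y → x ∈ s)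
    (h : (G.induce s).IsAcyclic) : G.IsAcyclic := by
  intro u c hc
  obtain ⟨y, huy, -, -⟩ := Walk.not_nil_iff.1 hc.not_nil
  have hmem := c.forall_mem_support_of_forall_adj (fun x y hxy => hs y x hxy.symm) (hs _ _ huy)
  have hmap : ((c.induce s hmem).map (Embedding.induce s).toHom).IsCycle := by
    rwa [Walk.map_induce]
  exact h _ ((Walk.isCycle_map_iff_of_injective (Embedding.induce (G := G) s).injective).1 hmap)

/-- In a forest the path between two vertices is unique, so it lies inside every walk. -/
lemma IsAcyclic.forall_mem_support_of_joinedWithin (hG : G.IsAcyclic)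
    (h : G.JoinedWithin P u v) {p : G.Walk u v} (hp : p.IsPath) : ∀ z ∈ p.support, P z := by
  obtain ⟨w, hw⟩ := h
  have : p = w.bypass := congrArg Subtype.val ((hG.subsingleton_path u v).elim ⟨p, hp⟩ w.toPath)
  exact fun z hz => hw z (w.support_bypass_subset_support (this ▸ hz))

lemma Walk.IsPath.eq_or_eq_of_unique_adj {p : G.Walk u v} (hp : p.IsPath) (hx : x ∈ p.support)
    (huniq : ∀ y z, G.Adj x y → G.Adj x z → y = z) : x = u ∨ x = v := by
  by_contra! hne
  obtain ⟨hxu, hxv⟩ := hne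
  have hspec := p.take_spec hx
  obtain ⟨z, hz, q, hq⟩ := Walk.not_nil_iff.1 (Walk.not_nil_of_ne (p := p.dropUntil x hx) hxv)
  obtain ⟨y, hy, r, hr⟩ :=
    Walk.not_nil_iff.1 (Walk.not_nil_of_ne (p := (p.takeUntil x hx).reverse) hxu)
  have hnodup := hp.isTrail.edges_nodup
  rw [← hspec, Walk.edges_append] at hnodup
  have hyr : s(x, y) ∈ (p.takeUntil x hx).edges := by
    rw [← List.mem_reverse, ← Walk.edges_reverse, hr]; simp
  exact List.disjoint_of_nodup_append hnodup hyr (by rw [huniq y z hy hz, hq]; simp)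

end SimpleGraph

open SimpleGraph

section JunctionForest

variable {α : Type*} [DecidableEq α] {ℱ : Finset (Finset α)} {H : SimpleGraph (Finset α)}
  {X M N A : Finset α}

/-- A junction forest over `ℱ` drawn in the ambient graph on all itemsets, so that cliques can
be added or removed without changing the vertex type. The running intersection property is
phrased with walks: in a forest this is equivalent to asking it along paths. -/
structure IsJunctionForest (ℱ : Finset (Finset α)) (H : SimpleGraph (Finset α)) : Prop where
  isAcyclic : H.IsAcyclic
  mem_of_adj : ∀ {X Y}, H.Adj X Y → X ∈ ℱ
  inter_nonempty : ∀ {X Y}, H.Adj X Y → (X ∩ Y).Nonempty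
  joinedWithin : ∀ {X Y}, X ∈ ℱ → Y ∈ ℱ → ∀ a ∈ X, a ∈ Y → H.JoinedWithin (a ∈ ·) X Y

namespace IsJunctionForest

lemma insert_of_subset (h : IsJunctionForest ℱ H) (hX : X ∉ ℱ) (hM : M ∈ ℱ) (hXM : X ⊆ M) :
    ∃ H', IsJunctionForest (insert X ℱ) H' := by
  rcases X.eq_empty_or_nonempty with rfl | hXne
  · refine ⟨H, h.isAcyclic, fun hAB => Finset.mem_insert_of_mem (h.mem_of_adj hAB),
      h.inter_nonempty, fun hA hB a haA haB => ?_⟩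
    rw [Finset.mem_insert] at hA hB
    rcases hA with rfl | hA
    · simp at haA
    rcases hB with rfl | hB
    · simp at haB
    exact h.joinedWithin hA hB a haA haB
  have hXM' : X ≠ M := ne_of_mem_of_not_mem hM hX |>.symm
  have hnr : ¬ H.Reachable X M := by
    rintro ⟨w⟩
    cases w with
    | nil => exact hXM' rfl
    | cons hadj _ => exact hX (h.mem_of_adj hadj)
  have hadj : (H ⊔ edge X M).Adj X M := Or.inr ((edge_adj ..).2 ⟨Or.inl ⟨rfl, rfl⟩, hXM'⟩)
  have hjoinX : ∀ {B}, B ∈ ℱ → ∀ a ∈ X, a ∈ B → (H ⊔ edge X M).JoinedWithin (a ∈ ·) X B :=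
    fun hB a haX haB => (JoinedWithin.of_adj hadj haX (hXM haX)).trans
      ((h.joinedWithin hM hB a (hXM haX) haB).mono le_sup_left)
  refine ⟨H ⊔ edge X M, h.isAcyclic.sup_edge_of_not_reachable hnr, fun hAB => ?_,
    fun hAB => ?_, fun hA hB a haA haB => ?_⟩
  · rcases hAB with hAB | hAB
    · exact Finset.mem_insert_of_mem (h.mem_of_adj hAB)
    · obtain ⟨⟨rfl, rfl⟩ | ⟨rfl, rfl⟩, -⟩ := (edge_adj ..).1 hAB
      exacts [Finset.mem_insert_self _ _, Finset.mem_insert_of_mem hM]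
  · rcases hAB with hAB | hAB
    · exact h.inter_nonempty hAB
    · obtain ⟨⟨rfl, rfl⟩ | ⟨rfl, rfl⟩, -⟩ := (edge_adj ..).1 hAB
      · rwa [Finset.inter_eq_left.2 hXM]
      · rwa [Finset.inter_eq_right.2 hXM]
  rw [Finset.mem_insert] at hA hB
  rcases hA with rfl | hA <;> rcases hB with rfl | hB
  · exact .refl haA
  · exact hjoinX hB a haA haB
  · exact (hjoinX hA a haB haA).symm
  · exact (h.joinedWithin hA hB a haA haB).mono le_sup_left

lemma erase_of_isolated (h : IsJunctionForest ℱ H) (hX : ∀ Z, ¬ H.Adj X Z) :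
    IsJunctionForest (ℱ.erase X) H where
  isAcyclic := h.isAcyclic
  mem_of_adj hAB := Finset.mem_erase.2 ⟨fun hAX => hX _ (hAX ▸ hAB), h.mem_of_adj hAB⟩
  inter_nonempty := h.inter_nonempty
  joinedWithin hA hB := h.joinedWithin (Finset.mem_of_mem_erase hA) (Finset.mem_of_mem_erase hB)

lemma erase_of_leaf (h : IsJunctionForest ℱ H) (hN : ∀ Z, H.Adj X Z ↔ Z = N) :
    IsJunctionForest (ℱ.erase X) (H.deleteEdges {s(X, N)}) := by
  have hdel : ∀ {A B}, H.Adj A B → A ≠ X → B ≠ X → (H.deleteEdges {s(X, N)}).Adj A B :=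
    fun hAB hAX hBX => (deleteEdges_adj ..).2 ⟨hAB, by simp [hAX, hBX]⟩
  refine ⟨h.isAcyclic.anti (deleteEdges_le _), fun hAB => ?_,
    fun hAB => h.inter_nonempty (deleteEdges_le _ hAB), fun hA hB a haA haB => ?_⟩
  · obtain ⟨hH, hne⟩ := (deleteEdges_adj ..).1 hAB
    refine Finset.mem_erase.2 ⟨?_, h.mem_of_adj hH⟩
    rintro rfl
    exact hne (by rw [(hN _).1 hH]; rfl)
  obtain ⟨hAX, hA⟩ := Finset.mem_erase.1 hA
  obtain ⟨hBX, hB⟩ := Finset.mem_erase.1 hB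
  obtain ⟨w, -⟩ := h.joinedWithin hA hB a haA haB
  -- a path through the leaf `X` would visit its only neighbour twice
  have hpath : ∀ Z ∈ w.bypass.support, a ∈ Z ∧ Z ≠ X := fun Z hZ =>
    ⟨h.isAcyclic.forall_mem_support_of_joinedWithin (h.joinedWithin hA hB a haA haB)
      w.bypass_isPath Z hZ, by
      rintro rfl
      have := w.bypass_isPath.eq_or_eq_of_unique_adj hZ
        fun y z hy hz => ((hN y).1 hy).trans ((hN z).1 hz).symm
      exact this.elim hAX.symm hBX.symm⟩
  exact JoinedWithin.of_forall_adj (fun x y hxy hx hy => .of_adj (hdel hxy hx.2 hy.2) hx.1 hy.1)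
    ⟨_, hpath⟩ haA

/-- The separator `X ∩ A` is contained in `A ∩ N`, and a walk through the edge `XA` can detour
through `N`. -/
lemma reattach (h : IsJunctionForest ℱ H) (hXN : H.Adj X N) (hsub : X ⊆ N) (hXA : H.Adj X A)
    (hAN : A ≠ N) : IsJunctionForest ℱ (H.deleteEdges {s(X, A)} ⊔ edge A N) := by
  set Hd := H.deleteEdges {s(X, A)}
  have hdNX : Hd.Adj N X :=
    (deleteEdges_adj ..).2 ⟨hXN.symm, by simp [hXN.ne.symm, hAN.symm]⟩
  have hAN₂ : (Hd ⊔ edge A N).Adj A N := Or.inr ((edge_adj ..).2 ⟨Or.inl ⟨rfl, rfl⟩, hAN⟩)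
  have hnr : ¬ Hd.Reachable A N := fun hr =>
    isAcyclic_iff_forall_adj_isBridge.1 h.isAcyclic hXA (hdNX.symm.reachable.trans hr.symm)
  refine ⟨(h.isAcyclic.anti (deleteEdges_le _)).sup_edge_of_not_reachable hnr, fun hAB => ?_,
    fun hAB => ?_, fun hA hB a haA haB => ?_⟩
  · rcases hAB with hAB | hAB
    · exact h.mem_of_adj (deleteEdges_le _ hAB)
    · obtain ⟨⟨rfl, rfl⟩ | ⟨rfl, rfl⟩, -⟩ := (edge_adj ..).1 hAB
      exacts [h.mem_of_adj hXA.symm, h.mem_of_adj hXN.symm]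
  · have hsep : X ∩ A ⊆ A ∩ N := by
      rw [Finset.inter_comm]; exact Finset.inter_subset_inter_left hsub
    rcases hAB with hAB | hAB
    · exact h.inter_nonempty (deleteEdges_le _ hAB)
    · obtain ⟨⟨rfl, rfl⟩ | ⟨rfl, rfl⟩, -⟩ := (edge_adj ..).1 hAB
      · exact (h.inter_nonempty hXA).mono hsep
      · exact (h.inter_nonempty hXA).mono (hsep.trans (Finset.inter_comm _ _).subset)
  refine (h.joinedWithin hA hB a haA haB).of_forall_adj (fun x y hxy hx hy => ?_) haA
  by_cases he : s(x, y) = s(X, A)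
  · have hXNA : a ∈ X → a ∈ A → (Hd ⊔ edge A N).JoinedWithin (a ∈ ·) X A := fun hX hA =>
      (JoinedWithin.of_adj (P := (a ∈ ·)) (Or.inl hdNX.symm) hX (hsub hX)).trans
        (.of_adj hAN₂.symm (hsub hX) hA)
    rcases Sym2.eq_iff.1 he with ⟨rfl, rfl⟩ | ⟨rfl, rfl⟩
    exacts [hXNA hx hy, (hXNA hy hx).symm]
  · exact .of_adj (Or.inl ((deleteEdges_adj ..).2 ⟨hxy, he⟩)) hx hy

lemma exists_adj_superset (h : IsJunctionForest ℱ H) (hX : X ∈ ℱ) (hM : M ∈ ℱ) (hXM : X ⊂ M)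
    (hXne : X.Nonempty) : ∃ N, H.Adj X N ∧ X ⊆ N := by
  obtain ⟨a, ha⟩ := hXne
  obtain ⟨w, -⟩ := h.joinedWithin hX hM a ha (hXM.subset ha)
  refine ⟨w.bypass.snd, w.bypass.adj_snd (Walk.not_nil_of_ne hXM.ne), fun b hb => ?_⟩
  exact h.isAcyclic.forall_mem_support_of_joinedWithin (h.joinedWithin hX hM b hb (hXM.subset hb))
    w.bypass_isPath _ (w.bypass.getVert_mem_support 1)

/-- Induction on the degree of `X`, which `reattach` lowers until `X` is a leaf. -/
lemma erase_of_ssubset (h : IsJunctionForest ℱ H) (hX : X ∈ ℱ) (hM : M ∈ ℱ) (hXM : X ⊂ M) :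
    ∃ H', IsJunctionForest (ℱ.erase X) H' := by
  obtain ⟨n, hn⟩ : ∃ n, (H.neighborSet X).ncard = n := ⟨_, rfl⟩
  induction n using Nat.strong_induction_on generalizing H with
  | _ n ih =>
  by_cases hiso : ∀ Z, ¬ H.Adj X Z
  · exact ⟨H, h.erase_of_isolated hiso⟩
  push Not at hiso
  obtain ⟨Z, hZ⟩ := hiso
  obtain ⟨N, hXN, hsub⟩ :=
    h.exists_adj_superset hX hM hXM ((h.inter_nonempty hZ).mono Finset.inter_subset_left)
  by_cases hleaf : ∀ A, H.Adj X A → A = N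
  · exact ⟨_, h.erase_of_leaf fun A => ⟨hleaf A, fun hA => hA ▸ hXN⟩⟩
  push Not at hleaf
  obtain ⟨A, hXA, hAN⟩ := hleaf
  refine ih _ ?_ (h.reattach hXN hsub hXA hAN) rfl
  have hadj : ∀ {Z}, (H.deleteEdges {s(X, A)} ⊔ edge A N).Adj X Z → H.Adj X Z ∧ Z ≠ A := by
    rintro Z (hXZ | hXZ)
    · obtain ⟨hXZ, hne⟩ := (deleteEdges_adj ..).1 hXZ
      exact ⟨hXZ, by rintro rfl; exact hne rfl⟩
    · obtain ⟨⟨rfl, rfl⟩ | ⟨rfl, rfl⟩, -⟩ := (edge_adj ..).1 hXZ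
      exacts [absurd rfl hXA.ne, absurd rfl hXN.ne]
  rw [← hn]
  refine Set.ncard_lt_ncard ((Set.ssubset_iff_of_subset fun Z hZ => (hadj hZ).1).2
    ⟨A, hXA, fun hA => (hadj hA).2 rfl⟩) ?_
  exact ℱ.finite_toSet.subset fun Z hZ => h.mem_of_adj (H.adj_symm hZ)

end IsJunctionForest

end JunctionForest

section Transfer

variable {K : ℕ} {ℱ : Finset (Finset (Fin K))}

lemma isJunctionTree_iff {G : SimpleGraph {C // C ∈ ℱ}} :
    IsJunctionTree ℱ G ↔ G.IsAcyclic ∧ (∀ X Y, G.Adj X Y → (X.1 ∩ Y.1).Nonempty) ∧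
      ∀ X Y (a : Fin K), a ∈ X.1 → a ∈ Y.1 → G.JoinedWithin (a ∈ ·.1) X Y := by
  refine ⟨fun ⟨hac, hint, hreach, hrip⟩ => ⟨hac, hint, fun X Y a hX hY => ?_⟩,
    fun ⟨hac, hint, hjoin⟩ => ⟨hac, hint, fun X Y a hX hY => ?_, fun X Y a hX hY p hp => ?_⟩⟩
  · obtain ⟨w⟩ := hreach X Y a hX hY
    exact ⟨w.bypass, hrip X Y a hX hY _ w.bypass_isPath⟩
  · obtain ⟨w, -⟩ := hjoin X Y a hX hY
    exact w.reachable
  · exact hac.forall_mem_support_of_joinedWithin (hjoin X Y a hX hY) hp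

lemma IsJunctionForest.isJunctionTree_comap {H : SimpleGraph (Finset (Fin K))}
    (h : IsJunctionForest ℱ H) :
    IsJunctionTree ℱ (H.comap (Function.Embedding.subtype (· ∈ ℱ))) := by
  refine isJunctionTree_iff.2 ⟨h.isAcyclic.of_comap _, fun X Y hXY => h.inter_nonempty hXY,
    fun X Y a hX hY => ?_⟩
  obtain ⟨w, hw⟩ := h.joinedWithin X.2 Y.2 a hX hY
  have hmem := w.forall_mem_support_of_forall_adj (fun _ _ hxy => h.mem_of_adj hxy.symm) X.2
  refine ⟨w.induce ℱ hmem, fun Z hZ => hw Z.1 ?_⟩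
  rw [Walk.support_induce] at hZ
  exact (List.mem_attachWith _ _).1 hZ

lemma IsJunctionTree.isJunctionForest_map {G : SimpleGraph {C // C ∈ ℱ}}
    (h : IsJunctionTree ℱ G) :
    IsJunctionForest ℱ (G.map (Function.Embedding.subtype (· ∈ ℱ))) := by
  obtain ⟨hac, hint, hjoin⟩ := isJunctionTree_iff.1 h
  refine ⟨isAcyclic_of_induce (s := ℱ) ?_ ?_, ?_, ?_, fun hX hY a haX haY => ?_⟩
  · rintro _ _ ⟨-, X, Y, -, rfl, -⟩
    exact X.2
  · show ((G.map _).comap (Function.Embedding.subtype (· ∈ ℱ))).IsAcyclic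
    rwa [comap_map_eq]
  · rintro _ _ ⟨-, X, Y, -, rfl, -⟩
    exact X.2
  · rintro _ _ ⟨-, X, Y, hXY, rfl, rfl⟩
    exact hint X Y hXY
  · exact (hjoin ⟨_, hX⟩ ⟨_, hY⟩ a haX haY).map (P := (a ∈ ·))
      (Embedding.map (Function.Embedding.subtype (· ∈ ℱ)) G).toHom

lemma decomposable_iff_exists_isJunctionForest :
    Decomposable ℱ ↔ ∃ H, IsJunctionForest ℱ H :=
  ⟨fun ⟨_, hG⟩ => ⟨_, hG.isJunctionForest_map⟩, fun ⟨_, hH⟩ => ⟨_, hH.isJunctionTree_comap⟩⟩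

end Transfer

section MaximalSets

variable {K : ℕ} {𝒢 ℱ : Finset (Finset (Fin K))} {X M : Finset (Fin K)}

lemma maxSets_subset (𝒢 : Finset (Finset (Fin K))) : maxSets 𝒢 ⊆ 𝒢 :=
  Finset.filter_subset _ _

lemma exists_mem_maxSets_superset (hX : X ∈ 𝒢) : ∃ M ∈ maxSets 𝒢, X ⊆ M := by
  obtain ⟨M, hXM, hM⟩ := 𝒢.exists_le_maximal hX
  exact ⟨M, Finset.mem_filter.2 ⟨hM.prop, fun Y hY hMY => le_antisymm hMY (hM.2 hY hMY)⟩, hXM⟩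

lemma exists_mem_superset_iff_exists_mem_maxSets_superset {T : Finset (Fin K)} :
    (∃ C ∈ 𝒢, T ⊆ C) ↔ ∃ M ∈ maxSets 𝒢, T ⊆ M :=
  ⟨fun ⟨_, hC, hTC⟩ => (exists_mem_maxSets_superset hC).imp fun _ ⟨hM, hCM⟩ => ⟨hM, hTC.trans hCM⟩,
    fun ⟨M, hM, hTM⟩ => ⟨M, maxSets_subset 𝒢 hM, hTM⟩⟩

lemma decomposable_erase_iff (hX : X ∈ ℱ) (hM : M ∈ ℱ) (hXM : X ⊂ M) :
    Decomposable (ℱ.erase X) ↔ Decomposable ℱ := by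
  simp only [decomposable_iff_exists_isJunctionForest]
  refine ⟨fun ⟨H, hH⟩ => ?_, fun ⟨H, hH⟩ => hH.erase_of_ssubset hX hM hXM⟩
  rw [← Finset.insert_erase hX]
  exact hH.insert_of_subset (Finset.notMem_erase X ℱ) (Finset.mem_erase.2 ⟨hXM.ne.symm, hM⟩)
    hXM.subset

lemma decomposable_iff_of_maxSets_subset (h₁ : maxSets 𝒢 ⊆ ℱ) (h₂ : ℱ ⊆ 𝒢) :
    Decomposable ℱ ↔ Decomposable (maxSets 𝒢) := by
  induction ℱ using Finset.strongInduction with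
  | H ℱ ih =>
  obtain rfl | hlt := h₁.eq_or_ssubset
  · rfl
  obtain ⟨X, hX, hXmax⟩ := Finset.exists_of_ssubset hlt
  obtain ⟨M, hM, hXM⟩ := exists_mem_maxSets_superset (h₂ hX)
  rw [← decomposable_erase_iff hX (h₁ hM) (hXM.ssubset_of_ne (by rintro rfl; exact hXmax hM))]
  exact ih _ (Finset.erase_ssubset hX)
    (fun Y hY => Finset.mem_erase.2 ⟨by rintro rfl; exact hXmax hY, h₁ hY⟩)
    ((Finset.erase_subset _ _).trans h₂)

end MaximalSets

section Moebius

open IncidenceAlgebra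

variable {𝕜 β ι : Type*} [Ring 𝕜] [PartialOrder β] [OrderBot β] [LocallyFiniteOrder β]
  [DecidableEq β]

def moebiusTransform (h : β → 𝕜) (x : β) : 𝕜 :=
  ∑ y ∈ Finset.Iic x, mu 𝕜 y x * h y

lemma sum_Iic_moebiusTransform (h : β → 𝕜) (x : β) :
    ∑ y ∈ Finset.Iic x, moebiusTransform h y = h x := by
  unfold moebiusTransform
  rw [Finset.sum_comm' (t' := Finset.Iic x) (s' := fun z => Finset.Icc z x) fun y z => by
    simp only [Finset.mem_Iic, Finset.mem_Icc]
    exact ⟨fun ⟨hyx, hzy⟩ => ⟨⟨hzy, hyx⟩, hzy.trans hyx⟩, fun ⟨⟨hzy, hyx⟩, _⟩ => ⟨hyx, hzy⟩⟩]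
  simp [← Finset.sum_mul, sum_Icc_mu_right]

lemma moebiusTransform_bot (h : β → 𝕜) : moebiusTransform h ⊥ = h ⊥ := by
  simp [moebiusTransform]

lemma sum_comp_eq_sum_card_smul_moebiusTransform [Fintype β] [DecidableLE β] (h : β → 𝕜)
    (s : Finset ι) (F : ι → β) :
    ∑ i ∈ s, h (F i) = ∑ y, (s.filter fun i => y ≤ F i).card • moebiusTransform h y := by
  simp_rw [← sum_Iic_moebiusTransform h, ← Finset.sum_const]
  exact Finset.sum_comm' fun i y => by simp [and_comm]

end Moebius

section TreeCount

variable {K : ℕ} {ℱ : Finset (Finset (Fin K))} {G : SimpleGraph {C // C ∈ ℱ}}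
  {T : Finset (Fin K)}

def separator {α : Type*} [DecidableEq α] {ℱ : Finset (Finset α)} (e : Sym2 {C // C ∈ ℱ}) :
    Finset α :=
  Sym2.lift ⟨fun X Y => X.1 ∩ Y.1, fun _ _ => Finset.inter_comm _ _⟩ e

lemma IsJunctionTree.isTree_induce_superset (h : IsJunctionTree ℱ G) (hT : T.Nonempty)
    (C₀ : {C // C ∈ ℱ}) (hC₀ : T ⊆ C₀.1) :
    (G.induce ↑(Finset.univ.filter fun C : {C // C ∈ ℱ} => T ⊆ C.1)).IsTree := by
  obtain ⟨hac, -, hreach, hrip⟩ := h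
  obtain ⟨a, ha⟩ := hT
  set s := Finset.univ.filter fun C : {C // C ∈ ℱ} => T ⊆ C.1
  have hsub : ∀ X : ↑s, T ⊆ X.1.1 := fun X => (Finset.mem_filter.1 X.2).2
  refine ⟨(connected_iff _).2 ⟨fun X Y => ?_, ⟨⟨C₀, by simpa [s] using hC₀⟩⟩⟩, hac.induce _⟩
  obtain ⟨w⟩ := hreach X Y a (hsub X ha) (hsub Y ha)
  have hpath : ∀ Z ∈ w.bypass.support, Z ∈ (s : Set {C // C ∈ ℱ}) := fun Z hZ => by
    simpa [s, Finset.subset_iff] using fun b hb =>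
      hrip X Y b (hsub X hb) (hsub Y hb) _ w.bypass_isPath Z hZ
  exact (w.bypass.induce _ hpath).reachable

lemma IsJunctionTree.card_superset_sub_card_separator (h : IsJunctionTree ℱ G)
    (hT : T.Nonempty) :
    ((Finset.univ.filter fun C : {C // C ∈ ℱ} => T ⊆ C.1).card : ℤ) -
        (G.edgeFinset.filter fun e => T ⊆ separator e).card =
      if ∃ C ∈ ℱ, T ⊆ C then 1 else 0 := by
  set s := Finset.univ.filter fun C : {C // C ∈ ℱ} => T ⊆ C.1
  have hE : (G.edgeFinset.filter fun e => T ⊆ separator e) =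
      G.edgeFinset.filter fun e => e.toFinset ⊆ s := by
    refine Finset.filter_congr fun e _ => ?_
    induction e using Sym2.ind with
    | _ X Y =>
      simp [separator, s, Sym2.toFinset_mk_eq, Finset.insert_subset_iff, Finset.subset_inter_iff]
  split_ifs with hcov
  · obtain ⟨C₀, hC₀, hTC₀⟩ := hcov
    have := (h.isTree_induce_superset hT ⟨C₀, hC₀⟩ hTC₀).card_edgeFinset
    rw [← Set.toFinset_card, Finset.toFinset_coe] at this
    rw [hE, card_filter_edgeFinset_toFinset_subset, ← this]
    push_cast
    ring
  · have hs : s = ∅ := Finset.filter_eq_empty_iff.2 fun C _ hC => hcov ⟨C.1, C.2, hC⟩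
    simp [hE, hs]

end TreeCount

section TreeSum

variable {𝕜 : Type*} [Ring 𝕜] {K : ℕ} {ℱ : Finset (Finset (Fin K))}
  {G : SimpleGraph {C // C ∈ ℱ}}

lemma IsJunctionTree.sum_sub_sum_separator (h : IsJunctionTree ℱ G) (f : Finset (Fin K) → 𝕜)
    (hf : f ∅ = 0) :
    ∑ C : {C // C ∈ ℱ}, f C.1 - ∑ e ∈ G.edgeFinset, f (separator e) =
      ∑ T ∈ Finset.univ.filter (fun T => ∃ C ∈ ℱ, T ⊆ C), moebiusTransform f T := by
  rw [sum_comp_eq_sum_card_smul_moebiusTransform, sum_comp_eq_sum_card_smul_moebiusTransform,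
    ← Finset.sum_sub_distrib, Finset.sum_filter]
  refine Finset.sum_congr rfl fun T _ => ?_
  rcases T.eq_empty_or_nonempty with rfl | hT
  · have h0 : moebiusTransform f ∅ = 0 := by
      rw [← Finset.bot_eq_empty, moebiusTransform_bot, Finset.bot_eq_empty, hf]
    simp [h0]
  rw [← Nat.cast_smul_eq_nsmul ℤ, ← Nat.cast_smul_eq_nsmul ℤ, ← sub_smul,
    h.card_superset_sub_card_separator hT]
  split_ifs <;> simp

end TreeSum

section Distribution

variable {K : ℕ} {q : (Fin K → Bool) → ℝ} {ℱ : Finset (Finset (Fin K))}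
  {G : SimpleGraph {C // C ∈ ℱ}}

lemma margAt_pos (hpos : ∀ v, 0 < q v) (X : Finset (Fin K)) (v : Fin K → Bool) :
    0 < margAt q X v :=
  Finset.sum_pos' (fun w _ => by split_ifs <;> simp [(hpos w).le])
    ⟨v, Finset.mem_univ v, by simp [hpos v]⟩

lemma margAt_empty (hq : ∑ v, q v = 1) (v : Fin K → Bool) : margAt q ∅ v = 1 := by
  simpa [margAt] using hq

lemma jtDist_eq (q : (Fin K → Bool) → ℝ) (G : SimpleGraph {C // C ∈ ℱ}) (v : Fin K → Bool) :
    jtDist q ℱ G v =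
      (∏ C : {C // C ∈ ℱ}, margAt q C.1 v) / ∏ e ∈ G.edgeFinset, margAt q (separator e) v := by
  unfold jtDist
  congr 1
  refine Finset.prod_congr rfl fun e _ => ?_
  induction e using Sym2.ind
  rfl

lemma jtDist_pos (hpos : ∀ v, 0 < q v) (G : SimpleGraph {C // C ∈ ℱ}) (v : Fin K → Bool) :
    0 < jtDist q ℱ G v := by
  rw [jtDist_eq]
  exact div_pos (Finset.prod_pos fun C _ => margAt_pos hpos _ _)
    (Finset.prod_pos fun e _ => margAt_pos hpos _ _)

lemma IsJunctionTree.log_jtDist (h : IsJunctionTree ℱ G) (hq : ∑ v, q v = 1)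
    (hpos : ∀ v, 0 < q v) (v : Fin K → Bool) :
    Real.log (jtDist q ℱ G v) = ∑ T ∈ Finset.univ.filter (fun T => ∃ C ∈ ℱ, T ⊆ C),
      moebiusTransform (fun S => Real.log (margAt q S v)) T := by
  rw [jtDist_eq, Real.log_div (Finset.prod_pos fun C _ => margAt_pos hpos _ _).ne'
    (Finset.prod_pos fun e _ => margAt_pos hpos _ _).ne',
    Real.log_prod fun C _ => (margAt_pos hpos _ _).ne',
    Real.log_prod fun e _ => (margAt_pos hpos _ _).ne']
  exact h.sum_sub_sum_separator (fun S => Real.log (margAt q S v))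
    (show Real.log (margAt q ∅ v) = 0 by rw [margAt_empty hq, Real.log_one])

end Distribution

theorem decomposable_iff_maxSets_general {K : ℕ} (q : (Fin K → Bool) → ℝ)
    (hq : IsDistribution q) (hpos : ∀ v, 0 < q v)
    (𝒢 : Finset (Finset (Fin K))) :
    (Decomposable 𝒢 ↔ Decomposable (maxSets 𝒢)) ∧
    ∀ (G₁ : SimpleGraph {C // C ∈ 𝒢}) (G₂ : SimpleGraph {C // C ∈ maxSets 𝒢}),
      IsJunctionTree 𝒢 G₁ → IsJunctionTree (maxSets 𝒢) G₂ →
      ∀ v, jtDist q 𝒢 G₁ v = jtDist q (maxSets 𝒢) G₂ v := by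
  refine ⟨decomposable_iff_of_maxSets_subset (maxSets_subset 𝒢) subset_rfl,
    fun G₁ G₂ h₁ h₂ v => Real.log_injOn_pos (jtDist_pos hpos _ _) (jtDist_pos hpos _ _) ?_⟩
  rw [h₁.log_jtDist hq.2 hpos, h₂.log_jtDist hq.2 hpos]
  simp only [exists_mem_superset_iff_exists_mem_maxSets_superset (𝒢 := 𝒢)]

/-- A downward closed family is decomposable iff its maximal sets are, and the
junction-tree distributions over the maximal sets and over the whole family coincide. -/
theorem decomposable_iff_maxSets {K : ℕ} (q : (Fin K → Bool) → ℝ)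
    (hq : IsDistribution q) (hpos : ∀ v, 0 < q v)
    (𝒢 : Finset (Finset (Fin K))) (hdc : DownwardClosed 𝒢) :
    (Decomposable 𝒢 ↔ Decomposable (maxSets 𝒢)) ∧
    ∀ (G₁ : SimpleGraph {C // C ∈ 𝒢}) (G₂ : SimpleGraph {C // C ∈ maxSets 𝒢}),
      IsJunctionTree 𝒢 G₁ → IsJunctionTree (maxSets 𝒢) G₂ →
      ∀ v, jtDist q 𝒢 G₁ v = jtDist q (maxSets 𝒢) G₂ v :=
  decomposable_iff_maxSets_general q hq hpos 𝒢
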